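/- With S, T' and A as in the setup, suppose A = Σ_{ℓ ∈ L} R^ℓ where L is a finite index set, each R^ℓ is a nonnegative matrix of rank at most one, and |L| ≤ r₊(S) + r₊(T'). Let L' ⊆ L be the set of ℓ such that R^ℓ has a nonzero entry in some red position, i.e., some position (i,(j,s)) with m < i ≤ m+p and s ≤ q, and let L'' ⊆ L be the set of ℓ such that R^ℓ has a nonzero entry in some blue position, i.e., some position in a column (j, q+1). Then L' and L'' are disjoint, L' ∪ L'' = L, |L'| = r₊(T') and |L''| = r₊(S). -/
import Mathlib

open Matrix

lemma minor_eq {α β : Type*} [Fintype α] [Fintype β] (M : Matrix α β ℝ)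
    (h : M.rank ≤ 1) (i₁ i₂ : α) (c₁ c₂ : β) :
    M i₁ c₁ * M i₂ c₂ = M i₁ c₂ * M i₂ c₁ := by
  by_contra hne
  have hd : M i₁ c₁ * M i₂ c₂ - M i₁ c₂ * M i₂ c₁ ≠ 0 := sub_ne_zero.mpr hne
  have hli : LinearIndependent ℝ ![Mᵀ c₁, Mᵀ c₂] := by
    rw [LinearIndependent.pair_iff]
    intro s t hst
    have h1 := congrFun hst i₁
    have h2 := congrFun hst i₂
    simp only [Pi.add_apply, Pi.smul_apply, Matrix.transpose_apply, smul_eq_mul,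
      Pi.zero_apply] at h1 h2
    constructor
    · have : s * (M i₁ c₁ * M i₂ c₂ - M i₁ c₂ * M i₂ c₁) = 0 := by
        linear_combination M i₂ c₂ * h1 - M i₁ c₂ * h2
      exact (mul_eq_zero.mp this).resolve_right hd
    · have : t * (M i₁ c₁ * M i₂ c₂ - M i₁ c₂ * M i₂ c₁) = 0 := by
        linear_combination M i₁ c₁ * h2 - M i₂ c₁ * h1
      exact (mul_eq_zero.mp this).resolve_right hd
  have hsub : Submodule.span ℝ (Set.range ![Mᵀ c₁, Mᵀ c₂]) ≤ Submodule.span ℝ (Set.range Mᵀ) := by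
    apply Submodule.span_mono
    rintro x ⟨i, rfl⟩
    fin_cases i <;> exact ⟨_, rfl⟩
  have h2le : 2 ≤ M.rank := by
    rw [Matrix.rank_eq_finrank_span_cols]
    calc 2 = Module.finrank ℝ (Submodule.span ℝ (Set.range ![Mᵀ c₁, Mᵀ c₂])) := by
              rw [finrank_span_eq_card hli]; simp
      _ ≤ _ := Submodule.finrank_mono hsub
  omega

lemma rank_le_one_outer {α β : Type*} [Fintype α] [Fintype β] (u : α → ℝ) (v : β → ℝ) :
    (Matrix.of fun i j => u i * v j : Matrix α β ℝ).rank ≤ 1 := by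
  have : (Matrix.of fun i j => u i * v j : Matrix α β ℝ)
      = (Matrix.of fun i (_ : Unit) => u i) * (Matrix.of fun (_ : Unit) j => v j) := by
    ext i j; simp [Matrix.mul_apply]
  rw [this]
  exact (Matrix.rank_mul_le_right _ _).trans ((Matrix.rank_le_card_height _).trans (by simp))

lemma rank_le_one_of_eq_outer {α β : Type*} [Fintype α] [Fintype β] (M : Matrix α β ℝ)
    (u : α → ℝ) (v : β → ℝ) (h : ∀ i j, M i j = u i * v j) : M.rank ≤ 1 := by
  have hM : M = Matrix.of fun i j => u i * v j := by ext i j; exact h i j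
  rw [hM]; exact rank_le_one_outer u v

lemma exists_outer {α β : Type*} [Fintype α] [Fintype β] (M : Matrix α β ℝ)
    (h : M.rank ≤ 1) : ∃ (u : α → ℝ) (v : β → ℝ), ∀ i j, M i j = u i * v j := by
  by_cases h0 : ∀ i j, M i j = 0
  · exact ⟨fun _ => 0, fun _ => 0, fun i j => by simp [h0]⟩
  · push_neg at h0
    obtain ⟨i₀, j₀, hij⟩ := h0
    refine ⟨fun i => M i j₀ / M i₀ j₀, fun j => M i₀ j, fun i j => ?_⟩
    have := minor_eq M h i i₀ j₀ j
    field_simp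
    linarith [this]

/-- The nonnegative rank of a matrix `M` with nonnegative real entries: the smallest `r`
such that `M` is a sum of `r` nonnegative matrices each of rank at most one. -/
noncomputable def nnegRank {α β : Type*} [Fintype α] [Fintype β] (M : Matrix α β ℝ) : ℕ :=
  sInf { r : ℕ | ∃ R : Fin r → Matrix α β ℝ,
      (∀ ℓ i j, 0 ≤ R ℓ i j) ∧ (∀ ℓ, (R ℓ).rank ≤ 1) ∧ M = ∑ ℓ, R ℓ }

lemma nnegRank_le_card {α β ι : Type*} [Fintype α] [Fintype β] [Fintype ι]
    (M : Matrix α β ℝ) (P : ι → Matrix α β ℝ)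
    (hpos : ∀ ℓ i j, 0 ≤ P ℓ i j) (hrank : ∀ ℓ, (P ℓ).rank ≤ 1)
    (hsum : M = ∑ ℓ, P ℓ) : nnegRank M ≤ Fintype.card ι := by
  apply Nat.sInf_le
  refine ⟨P ∘ (Fintype.equivFin ι).symm, fun ℓ i j => hpos _ _ _, fun ℓ => hrank _, ?_⟩
  rw [hsum]
  exact (Equiv.sum_comp (Fintype.equivFin ι).symm P).symm

/-- The `(m+p+1) × (n·(q+1))` matrix `A` of the setup, built from an `m × n` matrix `S` and a
`p × q` matrix `T'`: its column indexed by `(j, s)` is `(S_j ; t'_s ; 0)` for `s ≤ q`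
(0-indexed: `s < q`) and `(S_j ; 0 ; 1)` for `s = q+1` (0-indexed: `s = q`). -/
def buildA {m n p q : ℕ} (S : Matrix (Fin m) (Fin n) ℝ) (T' : Matrix (Fin p) (Fin q) ℝ) :
    Matrix (Fin (m + p + 1)) (Fin n × Fin (q + 1)) ℝ :=
  fun i js =>
    if h1 : (i : ℕ) < m then S ⟨i, h1⟩ js.1
    else if h2 : (i : ℕ) < m + p then
      (if h3 : (js.2 : ℕ) < q then T' ⟨(i : ℕ) - m, by omega⟩ ⟨js.2, h3⟩ else 0)
    else (if (js.2 : ℕ) < q then 0 else 1)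

/-- Claim 1: given a decomposition `A = Σ_{ℓ ∈ L} R^ℓ` into nonnegative rank-at-most-one
matrices with `|L| ≤ r₊(S) + r₊(T')` (and `n ≥ 1`, implicit in the setup), the set `L'` of
`ℓ` with support in a red position (row `i` with `m ≤ i < m+p` (0-indexed), column `(j,s)`
with `s < q`) and the set `L''` of `ℓ` with support in a blue position (some column
`(j, q+1)`, i.e. 0-indexed `s = q`) are disjoint, their union is all of `L`,
`|L'| = r₊(T')` and `|L''| = r₊(S)`. -/
theorem claim1 {m n p q : ℕ}
    (S : Matrix (Fin m) (Fin n) ℝ) (T' : Matrix (Fin p) (Fin q) ℝ)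
    (hS : ∀ i j, 0 ≤ S i j) (hT' : ∀ i j, 0 ≤ T' i j) (hn : 1 ≤ n)
    {L : Type*} [Fintype L] (R : L → Matrix (Fin (m + p + 1)) (Fin n × Fin (q + 1)) ℝ)
    (hpos : ∀ ℓ i js, 0 ≤ R ℓ i js) (hrank : ∀ ℓ, (R ℓ).rank ≤ 1)
    (hsum : buildA S T' = ∑ ℓ, R ℓ)
    (hcard : Fintype.card L ≤ nnegRank S + nnegRank T') :
    Disjoint
        {ℓ : L | ∃ (i : Fin (m + p + 1)) (j : Fin n) (s : Fin (q + 1)),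
          m ≤ (i : ℕ) ∧ (i : ℕ) < m + p ∧ (s : ℕ) < q ∧ R ℓ i (j, s) ≠ 0}
        {ℓ : L | ∃ (i : Fin (m + p + 1)) (j : Fin n), R ℓ i (j, Fin.last q) ≠ 0} ∧
      {ℓ : L | ∃ (i : Fin (m + p + 1)) (j : Fin n) (s : Fin (q + 1)),
          m ≤ (i : ℕ) ∧ (i : ℕ) < m + p ∧ (s : ℕ) < q ∧ R ℓ i (j, s) ≠ 0} ∪
        {ℓ : L | ∃ (i : Fin (m + p + 1)) (j : Fin n), R ℓ i (j, Fin.last q) ≠ 0} =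
        Set.univ ∧
      {ℓ : L | ∃ (i : Fin (m + p + 1)) (j : Fin n) (s : Fin (q + 1)),
          m ≤ (i : ℕ) ∧ (i : ℕ) < m + p ∧ (s : ℕ) < q ∧ R ℓ i (j, s) ≠ 0}.ncard =
        nnegRank T' ∧
      {ℓ : L | ∃ (i : Fin (m + p + 1)) (j : Fin n), R ℓ i (j, Fin.last q) ≠ 0}.ncard =
        nnegRank S := by
  classical
  set P1 : Set L := {ℓ : L | ∃ (i : Fin (m + p + 1)) (j : Fin n) (s : Fin (q + 1)),
      m ≤ (i : ℕ) ∧ (i : ℕ) < m + p ∧ (s : ℕ) < q ∧ R ℓ i (j, s) ≠ 0} with hP1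
  set P2 : Set L := {ℓ : L | ∃ (i : Fin (m + p + 1)) (j : Fin n),
      R ℓ i (j, Fin.last q) ≠ 0} with hP2
  -- entrywise bounds
  have hleA : ∀ ℓ i js, R ℓ i js ≤ buildA S T' i js := by
    intro ℓ i js
    rw [hsum]
    have : R ℓ i js ≤ ∑ ℓ', R ℓ' i js :=
      Finset.single_le_sum (fun ℓ' _ => hpos ℓ' i js) (Finset.mem_univ ℓ)
    simpa [Matrix.sum_apply] using this
  have hzero : ∀ ℓ i js, buildA S T' i js = 0 → R ℓ i js = 0 :=
    fun ℓ i js h => le_antisymm (h ▸ hleA ℓ i js) (hpos ℓ i js)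
  -- A vanishes at (i, (j, last q)) for m ≤ i < m+p
  have hA0 : ∀ (i : Fin (m + p + 1)) (j : Fin n), m ≤ (i : ℕ) → (i : ℕ) < m + p →
      buildA S T' i (j, Fin.last q) = 0 := by
    intro i j h1 h2
    unfold buildA
    rw [dif_neg (by omega), dif_pos h2, dif_neg (by simp)]
  -- disjointness
  have hdisj : Disjoint P1 P2 := by
    rw [Set.disjoint_left]
    rintro ℓ ⟨i₁, j₁, s₁, hm, hmp, hsq, hne1⟩ ⟨i₂, j₂, hne2⟩
    have hminor := minor_eq (R ℓ) (hrank ℓ) i₁ i₂ (j₁, s₁) (j₂, Fin.last q)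
    have h0 : R ℓ i₁ (j₂, Fin.last q) = 0 := hzero _ _ _ (hA0 i₁ j₂ hm hmp)
    rw [h0, zero_mul] at hminor
    rcases mul_eq_zero.mp hminor with h | h
    · exact hne1 h
    · exact hne2 h
  -- Finset versions
  set F1 : Finset L := Finset.univ.filter (· ∈ P1) with hF1
  set F2 : Finset L := Finset.univ.filter (· ∈ P2) with hF2
  have hP1F : P1 = ↑F1 := by ext ℓ; simp [hF1]
  have hP2F : P2 = ↑F2 := by ext ℓ; simp [hF2]
  -- nnegRank T' ≤ F1.card
  have j₀ : Fin n := ⟨0, hn⟩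
  have hb1 : nnegRank T' ≤ F1.card := by
    have := nnegRank_le_card T'
      (fun (ℓ : F1) => Matrix.of fun (i : Fin p) (s : Fin q) =>
        R ℓ.1 ⟨m + i, by omega⟩ (j₀, ⟨s, by omega⟩))
      (fun ℓ i s => hpos _ _ _)
      (fun ℓ => by
        obtain ⟨u, v, huv⟩ := exists_outer (R ℓ.1) (hrank ℓ.1)
        exact rank_le_one_of_eq_outer _ (fun i : Fin p => u ⟨m + i, by omega⟩)
          (fun s : Fin q => v (j₀, ⟨s, by omega⟩)) (fun i s => huv _ _))
      ?_
    · simpa [Fintype.card_coe] using this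
    · ext i s
      have hAval : buildA S T' ⟨m + i, by omega⟩ (j₀, ⟨s, by omega⟩) = T' i s := by
        unfold buildA
        rw [dif_neg (by simp), dif_pos (by simp [i.isLt]), dif_pos (by simpa using s.isLt)]
        congr 1 <;> exact Fin.ext (by simp)
      have hsumval := congrFun (congrFun hsum ⟨m + i, by omega⟩) (j₀, ⟨s, by omega⟩)
      rw [hAval] at hsumval
      rw [hsumval]
      simp only [Matrix.sum_apply, Matrix.of_apply]
      refine ((Finset.sum_subset (Finset.subset_univ F1) ?_).symm.trans
        (Finset.sum_coe_sort F1
          (fun ℓ => R ℓ ⟨m + i, by omega⟩ (j₀, ⟨s, by omega⟩))).symm)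
      intro ℓ _ hℓ
      have hℓP : ℓ ∉ P1 := by simpa [hF1] using hℓ
      rw [hP1] at hℓP
      simp only [Set.mem_setOf_eq, not_exists] at hℓP
      by_contra hne
      exact hℓP ⟨m + i, by omega⟩ j₀ ⟨s, by omega⟩
        ⟨by simp, by simpa using i.isLt, by simpa using s.isLt, hne⟩
  -- nnegRank S ≤ F2.card
  have hb2 : nnegRank S ≤ F2.card := by
    have := nnegRank_le_card S
      (fun (ℓ : F2) => Matrix.of fun (i : Fin m) (j : Fin n) =>
        R ℓ.1 ⟨i, by omega⟩ (j, Fin.last q))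
      (fun ℓ i j => hpos _ _ _)
      (fun ℓ => by
        obtain ⟨u, v, huv⟩ := exists_outer (R ℓ.1) (hrank ℓ.1)
        exact rank_le_one_of_eq_outer _ (fun i : Fin m => u ⟨i, by omega⟩)
          (fun j : Fin n => v (j, Fin.last q)) (fun i j => huv _ _))
      ?_
    · simpa [Fintype.card_coe] using this
    · ext i j
      have hAval : buildA S T' ⟨i, by omega⟩ (j, Fin.last q) = S i j := by
        unfold buildA
        rw [dif_pos (by simpa using i.isLt)]
      have hsumval := congrFun (congrFun hsum ⟨i, by omega⟩) (j, Fin.last q)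
      rw [hAval] at hsumval
      rw [hsumval]
      simp only [Matrix.sum_apply, Matrix.of_apply]
      refine ((Finset.sum_subset (Finset.subset_univ F2) ?_).symm.trans
        (Finset.sum_coe_sort F2
          (fun ℓ => R ℓ ⟨i, by omega⟩ (j, Fin.last q))).symm)
      intro ℓ _ hℓ
      have hℓP : ℓ ∉ P2 := by simpa [hF2] using hℓ
      rw [hP2] at hℓP
      simp only [Set.mem_setOf_eq, not_exists] at hℓP
      by_contra hne
      exact hℓP ⟨i, by omega⟩ j hne
  -- counting
  have hdisjF : Disjoint F1 F2 := by
    rw [Finset.disjoint_left]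
    intro ℓ h1 h2
    exact Set.disjoint_left.mp hdisj (by simpa [hF1] using h1) (by simpa [hF2] using h2)
  have hcup : (F1 ∪ F2).card = F1.card + F2.card := Finset.card_union_of_disjoint hdisjF
  have hle : F1.card + F2.card ≤ Fintype.card L := by
    rw [← hcup]; exact Finset.card_le_univ _
  have hc1 : F1.card = nnegRank T' := by omega
  have hc2 : F2.card = nnegRank S := by omega
  have huniv : F1 ∪ F2 = Finset.univ := by
    apply Finset.eq_univ_of_card
    omega
  refine ⟨hdisj, ?_, ?_, ?_⟩
  · rw [hP1F, hP2F, ← Finset.coe_union, huniv, Finset.coe_univ]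
  · rw [hP1F, Set.ncard_coe_finset]; exact hc1
  · rw [hP2F, Set.ncard_coe_finset]; exact hc2
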